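/- arXiv:2105.01708 — 4 statements merged into one kernel-verified Lean document; each statement's English description precedes it below -/
import Mathlib

section
/- Let x, y be distinct points in ℝⁿ, R > 0 with |x - y| ≤ R, and let L be the line through x and y. Then there is a constant C (depending only on R) such that for every δ > 0 and every point a in the ball B(x, R) with a not on the line L, if the distance from a to L is greater than Cδ, then |(x-a)/|x-a| - (y-a)/|y-a|| > δ|x - y|. -/
open Metric Set

set_option maxHeartbeats 1600000 in
/-- Vantage points in `B(x,R)` far from the line through `x,y`
δ-separate `x` and `y` under radial projection. -/
theorem radial_projection_separation (n : ℕ) (R : ℝ) (hR : 0 < R) :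
    ∃ C : ℝ, 0 < C ∧
      ∀ (x y : EuclideanSpace ℝ (Fin n)), x ≠ y → dist x y ≤ R →
        ∀ δ : ℝ, 0 < δ →
          ∀ a ∈ closedBall x R,
            a ∉ {p : EuclideanSpace ℝ (Fin n) | ∃ t : ℝ, p = x + t • (y - x)} →
            C * δ < Metric.infDist a {p : EuclideanSpace ℝ (Fin n) | ∃ t : ℝ, p = x + t • (y - x)} →
            δ * ‖x - y‖ < ‖‖x - a‖⁻¹ • (x - a) - ‖y - a‖⁻¹ • (y - a)‖ := by
  refine ⟨2 * R ^ 2, by positivity, ?_⟩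
  intro x y hxy hxyR δ hδ a ha haL hCd
  set L : Set (EuclideanSpace ℝ (Fin n)) := {p | ∃ t : ℝ, p = x + t • (y - x)} with hLdef
  have hax : a ≠ x := fun h => haL ⟨0, by simp [h]⟩
  have hay : a ≠ y := fun h => haL ⟨1, by simp [h]⟩
  set u : EuclideanSpace ℝ (Fin n) := x - a with hu
  set v : EuclideanSpace ℝ (Fin n) := y - a with hv
  have hu0 : u ≠ 0 := sub_ne_zero.mpr (Ne.symm hax)
  have hv0 : v ≠ 0 := sub_ne_zero.mpr (Ne.symm hay)
  set p := ‖u‖ with hpdef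
  set q := ‖v‖ with hqdef
  have hp : 0 < p := norm_pos_iff.mpr hu0
  have hq : 0 < q := norm_pos_iff.mpr hv0
  set s : ℝ := inner ℝ u v with hsdef
  have hs1 : s ≤ p * q := real_inner_le_norm u v
  have hs2 : -(p * q) ≤ s := neg_le_of_abs_le (abs_real_inner_le_norm u v)
  have hvu : v - u = y - x := by rw [hu, hv]; abel
  set W := ‖y - x‖ ^ 2 with hWdef
  have hW0 : 0 < W := by
    have h : y - x ≠ 0 := sub_ne_zero.mpr (Ne.symm hxy)
    exact pow_pos (norm_pos_iff.mpr h) 2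
  have hWeq : W = q ^ 2 - 2 * s + p ^ 2 := by
    rw [hWdef, ← hvu, norm_sub_sq_real, real_inner_comm, ← hsdef]
  -- c = ⟪u, y-x⟫ = s - p²
  have hc : (inner ℝ u (y - x) : ℝ) = s - p ^ 2 := by
    rw [← hvu, inner_sub_right, ← hsdef, real_inner_self_eq_norm_sq]
  -- infDist bound
  set d := Metric.infDist a L with hddef
  have hd0 : 0 < d := lt_trans (by positivity) hCd
  have hdle : d ≤ ‖u + (-((s - p ^ 2) / W)) • (y - x)‖ := by
    have hmem : x + (-((s - p ^ 2) / W)) • (y - x) ∈ L := ⟨_, rfl⟩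
    have := Metric.infDist_le_dist_of_mem (x := a) hmem
    rw [← hddef] at this
    refine this.trans_eq ?_
    rw [dist_eq_norm]
    have : a - (x + (-((s - p ^ 2) / W)) • (y - x))
        = -(u + (-((s - p ^ 2) / W)) • (y - x)) := by
      rw [hu]; abel
    rw [this, norm_neg]
  have hd2 : d ^ 2 * W ≤ p ^ 2 * q ^ 2 - s ^ 2 := by
    have hsq : d ^ 2 ≤ ‖u + (-((s - p ^ 2) / W)) • (y - x)‖ ^ 2 :=
      pow_le_pow_left₀ hd0.le hdle 2
    have hexp : ‖u + (-((s - p ^ 2) / W)) • (y - x)‖ ^ 2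
        = p ^ 2 + 2 * (-((s - p ^ 2) / W)) * (s - p ^ 2)
          + (-((s - p ^ 2) / W)) ^ 2 * W := by
      rw [norm_add_sq_real, real_inner_smul_right, hc, norm_smul,
        Real.norm_eq_abs, mul_pow, sq_abs, ← hpdef, ← hWdef]
      ring
    rw [hexp] at hsq
    have h2 : d ^ 2 * W ≤ (p ^ 2 + 2 * (-((s - p ^ 2) / W)) * (s - p ^ 2)
        + (-((s - p ^ 2) / W)) ^ 2 * W) * W :=
      mul_le_mul_of_nonneg_right hsq hW0.le
    have h3 : (p ^ 2 + 2 * (-((s - p ^ 2) / W)) * (s - p ^ 2)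
        + (-((s - p ^ 2) / W)) ^ 2 * W) * W = p ^ 2 * W - (s - p ^ 2) ^ 2 := by
      field_simp
      ring
    rw [h3] at h2
    nlinarith [hWeq]
  -- size bounds
  have hpR : p ≤ R := by
    have : dist a x ≤ R := mem_closedBall.mp ha
    rw [hpdef, hu, ← dist_eq_norm, dist_comm]
    exact this
  have hqR : q ≤ 2 * R := by
    have h1 : ‖y - a‖ ≤ ‖y - x‖ + ‖x - a‖ := by
      have : y - a = (y - x) + (x - a) := by abel
      rw [this]; exact norm_add_le _ _
    have h2 : ‖y - x‖ ≤ R := by rw [norm_sub_rev, ← dist_eq_norm]; exact hxyR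
    rw [hqdef, hv]
    linarith [hpR, h1]
  -- norm of the projection difference
  have hnu : ‖p⁻¹ • u‖ = 1 := by
    rw [norm_smul, norm_inv, Real.norm_eq_abs, abs_of_pos hp, ← hpdef]
    exact inv_mul_cancel₀ hp.ne'
  have hnv : ‖q⁻¹ • v‖ = 1 := by
    rw [norm_smul, norm_inv, Real.norm_eq_abs, abs_of_pos hq, ← hqdef]
    exact inv_mul_cancel₀ hq.ne'
  have hP2 : ‖p⁻¹ • u - q⁻¹ • v‖ ^ 2 = 2 - 2 * (p⁻¹ * (q⁻¹ * s)) := by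
    rw [norm_sub_sq_real, hnu, hnv, real_inner_smul_left, real_inner_smul_right, ← hsdef]
    ring
  have hP2' : ‖p⁻¹ • u - q⁻¹ • v‖ ^ 2 * (p * q) = 2 * (p * q) - 2 * s := by
    rw [hP2]
    field_simp
  clear_value u v p q s W d
  clear hnu hnv hP2 hdle hvu hc hu hv hu0 hv0 hsdef hpdef hqdef haL hLdef hddef ha hax hay hxyR hxy
  -- δ * p * q < d
  have hdpq : δ * (p * q) < d := by
    refine lt_of_le_of_lt ?_ hCd
    have hpq2 : p * q ≤ 2 * R ^ 2 :=
      calc p * q ≤ R * (2 * R) := mul_le_mul hpR hqR hq.le hR.le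
        _ = 2 * R ^ 2 := by ring
    calc δ * (p * q) = (p * q) * δ := mul_comm _ _
      _ ≤ 2 * R ^ 2 * δ := mul_le_mul_of_nonneg_right hpq2 hδ.le
  -- squared inequality
  have hkey : (δ * ‖y - x‖) ^ 2 < ‖p⁻¹ • u - q⁻¹ • v‖ ^ 2 := by
    have hpq : 0 < p * q := mul_pos hp hq
    have h2 : (δ * (p * q)) ^ 2 < d ^ 2 :=
      pow_lt_pow_left₀ hdpq (by positivity) (by norm_num)
    have h3 : δ ^ 2 * (p * q) ^ 2 * W < p ^ 2 * q ^ 2 - s ^ 2 :=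
      calc δ ^ 2 * (p * q) ^ 2 * W = (δ * (p * q)) ^ 2 * W := by ring
        _ < d ^ 2 * W := mul_lt_mul_of_pos_right h2 hW0
        _ ≤ p ^ 2 * q ^ 2 - s ^ 2 := hd2
    have h4 : p ^ 2 * q ^ 2 - s ^ 2 ≤ 2 * (p * q) * (p * q - s) := by
      nlinarith [sq_nonneg (p * q - s)]
    have h6 : δ ^ 2 * W * (p * q) < 2 * (p * q) - 2 * s := by
      have h5 : δ ^ 2 * W * (p * q) * (p * q) < (2 * (p * q) - 2 * s) * (p * q) :=
        calc δ ^ 2 * W * (p * q) * (p * q) = δ ^ 2 * (p * q) ^ 2 * W := by ring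
          _ < p ^ 2 * q ^ 2 - s ^ 2 := h3
          _ ≤ 2 * (p * q) * (p * q - s) := h4
          _ = (2 * (p * q) - 2 * s) * (p * q) := by ring
      exact lt_of_mul_lt_mul_right h5 hpq.le
    have h7 : δ ^ 2 * W * (p * q) < ‖p⁻¹ • u - q⁻¹ • v‖ ^ 2 * (p * q) := by
      rw [hP2']; exact h6
    have h8 : δ ^ 2 * W < ‖p⁻¹ • u - q⁻¹ • v‖ ^ 2 := lt_of_mul_lt_mul_right h7 hpq.le
    calc (δ * ‖y - x‖) ^ 2 = δ ^ 2 * W := by rw [mul_pow, hWdef]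
    _ < _ := h8
  have hfinal : δ * ‖y - x‖ < ‖p⁻¹ • u - q⁻¹ • v‖ :=
    lt_of_pow_lt_pow_left₀ 2 (norm_nonneg _) hkey
  rw [show ‖x - y‖ = ‖y - x‖ from norm_sub_rev x y]
  exact hfinal
end

section
/- Let γ : I → ℝ be C¹ on a compact interval I = [L₁, L₂], with |γ'| ≤ 1 and γ' Λ-bi-Lipschitz and decreasing (concave case). For a = (a₁,a₂), b = (b₁,b₂) in [0,h]² (h = (L₂-L₁)/2) and λ ∈ [L₁+h, L₂], define Φ_λ(a) = a₂ + γ(λ - a₁). Suppose the translated graphs a + Γ and b + Γ intersect at a point x = (x₁,x₂) (i.e., there exist s₀,t₀ ∈ I with a₁+s₀ = b₁+t₀ = x₁ and a₂+γ(s₀) = b₂+γ(t₀) = x₂). Then there are constants 0 < c₁ ≤ c₂ < ∞ depending only on Λ such that for all λ in the parameter interval, c₁|λ - x₁|·|a - b| ≤ |Φ_λ(a) - Φ_λ(b)| ≤ c₂|λ - x₁|·|a - b|. -/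
open Set

/-- MVT with two-sided bounds on the derivative. -/
lemma mvt_abs_bounds (f f' : ℝ → ℝ) (p q : ℝ) (hpq : p < q)
    (hc : ContinuousOn f (Icc p q))
    (hd : ∀ x ∈ Ioo p q, HasDerivAt f (f' x) x)
    (m M : ℝ)
    (hb : ∀ x ∈ Ioo p q, m ≤ |f' x| ∧ |f' x| ≤ M) :
    m * (q - p) ≤ |f q - f p| ∧ |f q - f p| ≤ M * (q - p) := by
  obtain ⟨c, hc', hceq⟩ := exists_hasDerivAt_eq_slope f f' hpq hc hd
  have hqp : 0 < q - p := sub_pos.2 hpq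
  have habs : |f q - f p| = |f' c| * (q - p) := by
    rw [hceq, abs_div, abs_of_pos hqp, div_mul_cancel₀]
    exact ne_of_gt hqp
  obtain ⟨h1, h2⟩ := hb c hc'
  exact ⟨by rw [habs]; exact mul_le_mul_of_nonneg_right h1 hqp.le,
    by rw [habs]; exact mul_le_mul_of_nonneg_right h2 hqp.le⟩

lemma contOn_shift (γ : ℝ → ℝ) (L₁ L₂ p q c : ℝ) (hγc : ContinuousOn γ (Icc L₁ L₂))
    (h1 : L₁ + c ≤ p) (h2 : q ≤ L₂ + c) :
    ContinuousOn (fun μ => γ (μ - c)) (Icc p q) :=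
  hγc.comp ((continuous_id.sub continuous_const).continuousOn)
    (fun μ hμ => ⟨by have := hμ.1; linarith,
      by have := hμ.2; linarith⟩)

lemma hasDeriv_shift (γ : ℝ → ℝ) (L₁ L₂ : ℝ)
    (hder : ∀ x ∈ Ioo L₁ L₂, HasDerivAt γ (deriv γ x) x) (c x : ℝ)
    (h1 : L₁ < x - c) (h2 : x - c < L₂) :
    HasDerivAt (fun μ => γ (μ - c)) (deriv γ (x - c)) x := by
  have := (hder (x - c) ⟨h1, h2⟩).comp x ((hasDerivAt_id x).sub_const c)
  rw [mul_one] at this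
  exact this

lemma key_interval (γ : ℝ → ℝ) (L₁ L₂ Λ : ℝ)
    (hder : ∀ x ∈ Ioo L₁ L₂, HasDerivAt γ (deriv γ x) x)
    (hγc : ContinuousOn γ (Icc L₁ L₂))
    (hbl : ∀ s ∈ Icc L₁ L₂, ∀ t ∈ Icc L₁ L₂,
      Λ⁻¹ * |s - t| ≤ |deriv γ s - deriv γ t| ∧ |deriv γ s - deriv γ t| ≤ Λ * |s - t|)
    (a₂ b₂ a₁ b₁ p q : ℝ) (hpq : p < q)
    (hpa : L₁ + a₁ ≤ p) (hqa : q ≤ L₂ + a₁) (hpb : L₁ + b₁ ≤ p) (hqb : q ≤ L₂ + b₁) :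
    Λ⁻¹ * |a₁ - b₁| * (q - p) ≤
      |((a₂ + γ (q - a₁)) - (b₂ + γ (q - b₁))) - ((a₂ + γ (p - a₁)) - (b₂ + γ (p - b₁)))| ∧
    |((a₂ + γ (q - a₁)) - (b₂ + γ (q - b₁))) - ((a₂ + γ (p - a₁)) - (b₂ + γ (p - b₁)))| ≤
      Λ * |a₁ - b₁| * (q - p) := by
  have hcont : ContinuousOn
      (fun μ => (a₂ + γ (μ - a₁)) - (b₂ + γ (μ - b₁))) (Icc p q) := by
    exact (continuousOn_const.add (contOn_shift γ L₁ L₂ p q a₁ hγc hpa hqa)).sub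
      (continuousOn_const.add (contOn_shift γ L₁ L₂ p q b₁ hγc hpb hqb))
  have hd : ∀ x ∈ Ioo p q, HasDerivAt
      (fun μ => (a₂ + γ (μ - a₁)) - (b₂ + γ (μ - b₁)))
      (deriv γ (x - a₁) - deriv γ (x - b₁)) x := by
    intro x hx
    have h1 := hasDeriv_shift γ L₁ L₂ hder a₁ x (by linarith [hx.1]) (by linarith [hx.2])
    have h2 := hasDeriv_shift γ L₁ L₂ hder b₁ x (by linarith [hx.1]) (by linarith [hx.2])
    exact (h1.const_add a₂).sub (h2.const_add b₂)
  have hb : ∀ x ∈ Ioo p q,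
      Λ⁻¹ * |a₁ - b₁| ≤ |deriv γ (x - a₁) - deriv γ (x - b₁)| ∧
      |deriv γ (x - a₁) - deriv γ (x - b₁)| ≤ Λ * |a₁ - b₁| := by
    intro x hx
    have hma : x - a₁ ∈ Icc L₁ L₂ := ⟨by linarith [hx.1], by linarith [hx.2]⟩
    have hmb : x - b₁ ∈ Icc L₁ L₂ := ⟨by linarith [hx.1], by linarith [hx.2]⟩
    have := hbl (x - a₁) hma (x - b₁) hmb
    have e : |(x - a₁) - (x - b₁)| = |a₁ - b₁| := by
      rw [show (x - a₁) - (x - b₁) = -(a₁ - b₁) by ring, abs_neg]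
    rw [e] at this
    exact this
  exact mvt_abs_bounds _ _ p q hpq hcont hd _ _ hb

/-- in the intersecting case, `|Φ_λ(a) - Φ_λ(b)| ∼ |λ - x₁|·|a - b|`,
with constants depending only on the bi-Lipschitz constant `Λ`. -/
theorem curve_projection_comparable (Λ : ℝ) (hΛ : 0 < Λ) :
    ∃ c₁ c₂ : ℝ, 0 < c₁ ∧ c₁ ≤ c₂ ∧
      ∀ (γ : ℝ → ℝ) (L₁ L₂ : ℝ), L₁ < L₂ →
        ContDiffOn ℝ 1 γ (Icc L₁ L₂) →
        (∀ t ∈ Icc L₁ L₂, |deriv γ t| ≤ 1) →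
        (∀ s ∈ Icc L₁ L₂, ∀ t ∈ Icc L₁ L₂,
          Λ⁻¹ * |s - t| ≤ |deriv γ s - deriv γ t| ∧ |deriv γ s - deriv γ t| ≤ Λ * |s - t|) →
        StrictAntiOn (deriv γ) (Icc L₁ L₂) →
        ∀ (a b : ℝ × ℝ), a ∈ Icc (0, 0) ((L₂ - L₁)/2, (L₂ - L₁)/2) →
          b ∈ Icc (0, 0) ((L₂ - L₁)/2, (L₂ - L₁)/2) →
          ∀ s₀ ∈ Icc L₁ L₂, ∀ t₀ ∈ Icc L₁ L₂,
            a.1 + s₀ = b.1 + t₀ → a.2 + γ s₀ = b.2 + γ t₀ →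
            ∀ lam ∈ Icc (L₁ + (L₂ - L₁)/2) L₂,
              c₁ * |lam - (a.1 + s₀)| * ‖a - b‖ ≤
                  |(a.2 + γ (lam - a.1)) - (b.2 + γ (lam - b.1))| ∧
              |(a.2 + γ (lam - a.1)) - (b.2 + γ (lam - b.1))| ≤
                  c₂ * |lam - (a.1 + s₀)| * ‖a - b‖ := by
  refine ⟨min Λ⁻¹ Λ, max Λ⁻¹ Λ, lt_min (inv_pos.2 hΛ) hΛ, min_le_max, ?_⟩
  intro γ L₁ L₂ hL hγ hd1 hbl _hanti a b ha hb s₀ hs₀ t₀ ht₀ hx1 hx2 lam hlam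
  have ha1 : 0 ≤ a.1 := ha.1.1
  have ha1' : a.1 ≤ (L₂ - L₁)/2 := ha.2.1
  have hb1 : 0 ≤ b.1 := hb.1.1
  have hb1' : b.1 ≤ (L₂ - L₁)/2 := hb.2.1
  have hγc := hγ.continuousOn
  have hder : ∀ x ∈ Ioo L₁ L₂, HasDerivAt γ (deriv γ x) x := fun x hx =>
    ((hγ.differentiableOn one_ne_zero x (Ioo_subset_Icc_self hx)).differentiableAt
      (Icc_mem_nhds hx.1 hx.2)).hasDerivAt
  -- |a.2 - b.2| ≤ |a.1 - b.1|
  have hkey : a.2 - b.2 = γ t₀ - γ s₀ := by linarith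
  have hts : t₀ - s₀ = a.1 - b.1 := by linarith
  have habs2 : |a.2 - b.2| ≤ |a.1 - b.1| := by
    rcases lt_trichotomy s₀ t₀ with h | h | h
    · have := mvt_abs_bounds γ (deriv γ) s₀ t₀ h
        (hγc.mono (Icc_subset_Icc hs₀.1 ht₀.2))
        (fun x hx => hder x ⟨lt_of_le_of_lt hs₀.1 hx.1, lt_of_lt_of_le hx.2 ht₀.2⟩)
        0 1 (fun x hx => ⟨abs_nonneg _,
          hd1 x ⟨le_of_lt (lt_of_le_of_lt hs₀.1 hx.1), le_of_lt (lt_of_lt_of_le hx.2 ht₀.2)⟩⟩)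
      have h2 := this.2
      rw [one_mul] at h2
      rw [hkey]
      calc |γ t₀ - γ s₀| ≤ t₀ - s₀ := h2
        _ = a.1 - b.1 := hts
        _ ≤ |a.1 - b.1| := le_abs_self _
    · rw [hkey, h, sub_self, abs_zero]; exact abs_nonneg _
    · have := mvt_abs_bounds γ (deriv γ) t₀ s₀ h
        (hγc.mono (Icc_subset_Icc ht₀.1 hs₀.2))
        (fun x hx => hder x ⟨lt_of_le_of_lt ht₀.1 hx.1, lt_of_lt_of_le hx.2 hs₀.2⟩)
        0 1 (fun x hx => ⟨abs_nonneg _,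
          hd1 x ⟨le_of_lt (lt_of_le_of_lt ht₀.1 hx.1), le_of_lt (lt_of_lt_of_le hx.2 hs₀.2)⟩⟩)
      have h2 := this.2
      rw [one_mul] at h2
      rw [hkey, abs_sub_comm]
      calc |γ s₀ - γ t₀| ≤ s₀ - t₀ := h2
        _ = -(a.1 - b.1) := by linarith
        _ ≤ |a.1 - b.1| := neg_le_abs _
  have hnorm : ‖a - b‖ = |a.1 - b.1| := by
    rw [Prod.norm_def, Prod.fst_sub, Prod.snd_sub, Real.norm_eq_abs, Real.norm_eq_abs]
    exact max_eq_left habs2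
  set X := a.1 + s₀ with hX
  have e1 : X - a.1 = s₀ := by rw [hX]; ring
  have e2 : X - b.1 = t₀ := by rw [hX]; linarith
  have hz : (a.2 + γ s₀) - (b.2 + γ t₀) = 0 := by linarith
  have hXa : L₁ + a.1 ≤ X := by rw [hX]; linarith [hs₀.1]
  have hXa' : X ≤ L₂ + a.1 := by rw [hX]; linarith [hs₀.2]
  have hXb : L₁ + b.1 ≤ X := by rw [hX]; linarith [ht₀.1]
  have hXb' : X ≤ L₂ + b.1 := by rw [hX]; linarith [ht₀.2]
  have hla : L₁ + a.1 ≤ lam := by linarith [hlam.1]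
  have hla' : lam ≤ L₂ + a.1 := by linarith [hlam.2]
  have hlb : L₁ + b.1 ≤ lam := by linarith [hlam.1]
  have hlb' : lam ≤ L₂ + b.1 := by linarith [hlam.2]
  have hD : 0 ≤ |a.1 - b.1| := abs_nonneg _
  have hc1 : min Λ⁻¹ Λ ≤ Λ⁻¹ := min_le_left _ _
  have hc2 : Λ ≤ max Λ⁻¹ Λ := le_max_right _ _
  rw [hnorm]
  rcases lt_trichotomy lam X with h | h | h
  · obtain ⟨lo, hi⟩ := key_interval γ L₁ L₂ Λ hder hγc hbl a.2 b.2 a.1 b.1 lam X h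
      hla hXa' hlb hXb'
    rw [e1, e2, hz, zero_sub, abs_neg] at lo hi
    have habslam : |lam - X| = X - lam := by
      rw [abs_of_neg (by linarith : lam - X < 0)]; ring
    rw [habslam]
    have h0 : 0 ≤ X - lam := by linarith
    constructor
    · calc min Λ⁻¹ Λ * (X - lam) * |a.1 - b.1|
          ≤ Λ⁻¹ * (X - lam) * |a.1 - b.1| :=
            mul_le_mul_of_nonneg_right (mul_le_mul_of_nonneg_right hc1 h0) hD
        _ = Λ⁻¹ * |a.1 - b.1| * (X - lam) := by ring
        _ ≤ _ := lo
    · calc |(a.2 + γ (lam - a.1)) - (b.2 + γ (lam - b.1))|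
          ≤ Λ * |a.1 - b.1| * (X - lam) := hi
        _ = Λ * (X - lam) * |a.1 - b.1| := by ring
        _ ≤ max Λ⁻¹ Λ * (X - lam) * |a.1 - b.1| :=
            mul_le_mul_of_nonneg_right (mul_le_mul_of_nonneg_right hc2 h0) hD
  · rw [h]
    constructor
    · rw [sub_self, abs_zero, mul_zero, zero_mul, e1, e2, hz, abs_zero]
    · rw [sub_self, abs_zero, mul_zero, zero_mul, e1, e2, hz, abs_zero]
  · obtain ⟨lo, hi⟩ := key_interval γ L₁ L₂ Λ hder hγc hbl a.2 b.2 a.1 b.1 X lam h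
      hXa hla' hXb hlb'
    rw [e1, e2, hz, sub_zero] at lo hi
    have habslam : |lam - X| = lam - X := abs_of_pos (by linarith)
    rw [habslam]
    have h0 : 0 ≤ lam - X := by linarith
    constructor
    · calc min Λ⁻¹ Λ * (lam - X) * |a.1 - b.1|
          ≤ Λ⁻¹ * (lam - X) * |a.1 - b.1| :=
            mul_le_mul_of_nonneg_right (mul_le_mul_of_nonneg_right hc1 h0) hD
        _ = Λ⁻¹ * |a.1 - b.1| * (lam - X) := by ring
        _ ≤ _ := lo
    · calc |(a.2 + γ (lam - a.1)) - (b.2 + γ (lam - b.1))|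
          ≤ Λ * |a.1 - b.1| * (lam - X) := hi
        _ = Λ * (lam - X) * |a.1 - b.1| := by ring
        _ ≤ max Λ⁻¹ Λ * (lam - X) * |a.1 - b.1| :=
            mul_le_mul_of_nonneg_right (mul_le_mul_of_nonneg_right hc2 h0) hD
end

section
/- With the setup of the previous statement (γ C¹ on compact I, |γ'| ≤ 1, γ' Λ-bi-Lipschitz, Φ_λ(a) = a₂ + γ(λ-a₁)), there exist constants c > 0 and δ₀ > 0 depending only on Λ and |I| such that for all distinct a, b ∈ Ω = [0,h]² and all 0 < δ ≤ δ₀: the Lebesgue measure of {λ ∈ A : |Φ_λ(a) - Φ_λ(b)| ≤ δ} is at most c·δ/|a - b|. (1-transversality of curve projections.) -/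
open Set MeasureTheory

private lemma deriv_interior_aux {L₁ L₂ : ℝ} {γ : ℝ → ℝ}
    (hγ : ContDiffOn ℝ 1 γ (Icc L₁ L₂)) {x : ℝ} (hx : x ∈ Ioo L₁ L₂) :
    HasDerivAt γ (deriv γ x) x := by
  have := (hγ.differentiableOn one_ne_zero).differentiableAt (Icc_mem_nhds hx.1 hx.2)
  exact this.hasDerivAt

private lemma lip_aux {L₁ L₂ : ℝ} {γ : ℝ → ℝ}
    (hγ : ContDiffOn ℝ 1 γ (Icc L₁ L₂))
    (hder : ∀ t ∈ Icc L₁ L₂, |deriv γ t| ≤ 1)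
    {s t : ℝ} (hs : s ∈ Icc L₁ L₂) (ht : t ∈ Icc L₁ L₂) :
    |γ s - γ t| ≤ |s - t| := by
  suffices H : ∀ s t : ℝ, s ∈ Icc L₁ L₂ → t ∈ Icc L₁ L₂ → t < s → |γ s - γ t| ≤ |s - t| by
    rcases lt_trichotomy s t with h | h | h
    · have := H t s ht hs h
      rwa [abs_sub_comm (γ t), abs_sub_comm t] at this
    · simp [h]
    · exact H s t hs ht h
  intro s t hs ht hts
  obtain ⟨ξ, hξ, hslope⟩ := exists_hasDerivAt_eq_slope γ (deriv γ) hts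
    (hγ.continuousOn.mono (Icc_subset_Icc ht.1 hs.2))
    (fun x hx => deriv_interior_aux hγ ⟨lt_of_le_of_lt ht.1 hx.1, lt_of_lt_of_le hx.2 hs.2⟩)
  have hξI : ξ ∈ Icc L₁ L₂ := ⟨le_of_lt (lt_of_le_of_lt ht.1 hξ.1), le_of_lt (lt_of_lt_of_le hξ.2 hs.2)⟩
  have : γ s - γ t = deriv γ ξ * (s - t) := by
    rw [eq_div_iff (by linarith : s - t ≠ 0)] at hslope
    linarith [hslope]
  rw [this, abs_mul]
  calc |deriv γ ξ| * |s - t| ≤ 1 * |s - t| := by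
        exact mul_le_mul_of_nonneg_right (hder ξ hξI) (abs_nonneg _)
    _ = |s - t| := one_mul _

/-- 1-transversality of the curve-projection family
`Φ_λ(a) = a₂ + γ(λ - a₁)`: the measure of the set of parameters failing to
δ-separate two points `a ≠ b` is at most `c δ / |a - b|`. -/
theorem curve_projections_one_transversal (Λ L₁ L₂ : ℝ) (hΛ : 0 < Λ) (hI : L₁ < L₂) :
    ∃ c δ₀ : ℝ, 0 < c ∧ 0 < δ₀ ∧
      ∀ (γ : ℝ → ℝ),
        ContDiffOn ℝ 1 γ (Icc L₁ L₂) →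
        (∀ t ∈ Icc L₁ L₂, |deriv γ t| ≤ 1) →
        (∀ s ∈ Icc L₁ L₂, ∀ t ∈ Icc L₁ L₂,
          Λ⁻¹ * |s - t| ≤ |deriv γ s - deriv γ t| ∧ |deriv γ s - deriv γ t| ≤ Λ * |s - t|) →
        ∀ (a b : ℝ × ℝ), a ∈ Icc (0, 0) ((L₂ - L₁)/2, (L₂ - L₁)/2) →
          b ∈ Icc (0, 0) ((L₂ - L₁)/2, (L₂ - L₁)/2) → a ≠ b →
          ∀ δ : ℝ, 0 < δ → δ ≤ δ₀ →
            volume {lam ∈ Icc (L₁ + (L₂ - L₁)/2) L₂ |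
                |(a.2 + γ (lam - a.1)) - (b.2 + γ (lam - b.1))| ≤ δ} ≤
              ENNReal.ofReal (c * δ / ‖a - b‖) := by
  set h : ℝ := (L₂ - L₁) / 2 with hh
  have hh0 : 0 < h := by rw [hh]; linarith
  refine ⟨3 * h + 12 * Λ, 1, by positivity, one_pos, ?_⟩
  intro γ hγ hder hbilip a b ha hb hab δ hδ hδ1
  set d : ℝ := ‖a - b‖ with hd
  have hd0 : 0 < d := by
    rw [hd, norm_pos_iff, sub_ne_zero]; exact hab
  set u : ℝ := a.1 - b.1 with hu
  set v : ℝ := a.2 - b.2 with hv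
  have hdmax : d = max |u| |v| := by
    rw [hd, Prod.norm_def]
    simp [hu, hv, Real.norm_eq_abs, Prod.fst_sub, Prod.snd_sub]
  -- coordinates bounds
  have ha1 : 0 ≤ a.1 ∧ a.1 ≤ h := ⟨ha.1.1, ha.2.1⟩
  have hb1 : 0 ≤ b.1 ∧ b.1 ≤ h := ⟨hb.1.1, hb.2.1⟩
  set S := {lam ∈ Icc (L₁ + h) L₂ | |(a.2 + γ (lam - a.1)) - (b.2 + γ (lam - b.1))| ≤ δ} with hS
  -- membership into I lemma
  have hmemI : ∀ (p : ℝ), 0 ≤ p → p ≤ h → ∀ lam ∈ Icc (L₁ + h) L₂, lam - p ∈ Icc L₁ L₂ := by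
    intro p hp0 hph lam hlam
    constructor
    · linarith [hlam.1]
    · linarith [hlam.2]
  have hcd : 0 < (3 * h + 12 * Λ) * δ / d := by positivity
  by_cases hcase : d ≤ 3 * δ
  · -- trivial bound by the length of the interval
    calc volume S ≤ volume (Icc (L₁ + h) L₂) := measure_mono (fun x hx => hx.1)
      _ = ENNReal.ofReal h := by rw [Real.volume_Icc]; ring_nf; congr 1; linarith
      _ ≤ ENNReal.ofReal ((3 * h + 12 * Λ) * δ / d) := by
          apply ENNReal.ofReal_le_ofReal
          rw [le_div_iff₀ hd0]
          nlinarith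
  · push_neg at hcase
    by_cases hvu : |u| + δ < |v|
    · -- set is empty
      have hempty : S ⊆ (∅ : Set ℝ) := by
        intro lam hlam
        exfalso
        have hmem := hlam.1
        have hsa := hmemI a.1 ha1.1 ha1.2 lam hmem
        have hsb := hmemI b.1 hb1.1 hb1.2 lam hmem
        have hlip := lip_aux hγ hder hsa hsb
        have heq : (lam - a.1) - (lam - b.1) = -u := by rw [hu]; ring
        rw [heq, abs_neg] at hlip
        have h2 : |(a.2 + γ (lam - a.1)) - (b.2 + γ (lam - b.1))| ≥ |v| - |γ (lam - a.1) - γ (lam - b.1)| := by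
          have heq2 : (a.2 + γ (lam - a.1)) - (b.2 + γ (lam - b.1)) = v + (γ (lam - a.1) - γ (lam - b.1)) := by
            rw [hv]; ring
          rw [heq2]
          have h3 := abs_sub_abs_le_abs_sub v (-(γ (lam - a.1) - γ (lam - b.1)))
          rw [abs_neg, sub_neg_eq_add] at h3
          linarith
        have := hlam.2
        linarith
      calc volume S ≤ volume (∅ : Set ℝ) := measure_mono hempty
        _ = 0 := measure_empty
        _ ≤ _ := zero_le
    · push_neg at hvu
      -- |u| ≥ 2d/3
      have hu23 : 2 * d / 3 ≤ |u| := by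
        rcases max_cases |u| |v| with ⟨h1, _⟩ | ⟨h1, _⟩ <;> rw [h1] at hdmax <;> [linarith; linarith]
      have hu0 : 0 < |u| := by linarith
      -- diameter claim
      have hdiam : ∀ x ∈ S, ∀ y ∈ S, x < y → y - x ≤ 2 * Λ * δ / |u| := by
        intro x hx y hy hxy
        set f : ℝ → ℝ := fun lam => (a.2 + γ (lam - a.1)) - (b.2 + γ (lam - b.1)) with hf
        have hsub : Icc x y ⊆ Icc (L₁ + h) L₂ := Icc_subset_Icc hx.1.1 hy.1.2
        have hcont : ContinuousOn f (Icc x y) := by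
          apply ContinuousOn.sub
          · apply continuousOn_const.add
            apply hγ.continuousOn.comp (continuousOn_id.sub continuousOn_const)
            intro lam hlam
            exact hmemI a.1 ha1.1 ha1.2 lam (hsub hlam)
          · apply continuousOn_const.add
            apply hγ.continuousOn.comp (continuousOn_id.sub continuousOn_const)
            intro lam hlam
            exact hmemI b.1 hb1.1 hb1.2 lam (hsub hlam)
        have hderf : ∀ ξ ∈ Ioo x y, HasDerivAt f (deriv γ (ξ - a.1) - deriv γ (ξ - b.1)) ξ := by
          intro ξ hξ
          have hξmem : ∀ p : ℝ, 0 ≤ p → p ≤ h → ξ - p ∈ Ioo L₁ L₂ := by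
            intro p hp0 hph
            constructor
            · have := hx.1.1; linarith [hξ.1]
            · have := hy.1.2; linarith [hξ.2]
          have h1 : HasDerivAt (fun lam => γ (lam - a.1)) (deriv γ (ξ - a.1)) ξ := by
            have hg := deriv_interior_aux hγ (hξmem a.1 ha1.1 ha1.2)
            have hid : HasDerivAt (fun lam : ℝ => lam - a.1) 1 ξ := (hasDerivAt_id ξ).sub_const a.1
            simpa [Function.comp_def] using hg.comp ξ hid
          have h2 : HasDerivAt (fun lam => γ (lam - b.1)) (deriv γ (ξ - b.1)) ξ := by
            have hg := deriv_interior_aux hγ (hξmem b.1 hb1.1 hb1.2)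
            have hid : HasDerivAt (fun lam : ℝ => lam - b.1) 1 ξ := (hasDerivAt_id ξ).sub_const b.1
            simpa [Function.comp_def] using hg.comp ξ hid
          exact (h1.const_add a.2).sub (h2.const_add b.2)
        obtain ⟨ξ, hξ, hslope⟩ := exists_hasDerivAt_eq_slope f
          (fun ξ => deriv γ (ξ - a.1) - deriv γ (ξ - b.1)) hxy hcont hderf
        have hfs : f y - f x = (deriv γ (ξ - a.1) - deriv γ (ξ - b.1)) * (y - x) := by
          rw [eq_div_iff (by linarith : y - x ≠ 0)] at hslope
          linarith [hslope]
        have hξa : ξ - a.1 ∈ Icc L₁ L₂ := by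
          have := hmemI a.1 ha1.1 ha1.2 ξ ⟨le_of_lt (lt_of_le_of_lt hx.1.1 hξ.1), le_of_lt (lt_of_lt_of_le hξ.2 hy.1.2)⟩
          exact this
        have hξb : ξ - b.1 ∈ Icc L₁ L₂ := by
          exact hmemI b.1 hb1.1 hb1.2 ξ ⟨le_of_lt (lt_of_le_of_lt hx.1.1 hξ.1), le_of_lt (lt_of_lt_of_le hξ.2 hy.1.2)⟩
        have hlow := (hbilip (ξ - a.1) hξa (ξ - b.1) hξb).1
        have heq : (ξ - a.1) - (ξ - b.1) = -u := by rw [hu]; ring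
        rw [heq, abs_neg] at hlow
        have hfy : |f y| ≤ δ := hy.2
        have hfx : |f x| ≤ δ := hx.2
        have h2δ : |f y - f x| ≤ 2 * δ := by
          calc |f y - f x| ≤ |f y| + |f x| := abs_sub _ _
            _ ≤ 2 * δ := by linarith
        rw [hfs, abs_mul, abs_of_pos (by linarith : (0:ℝ) < y - x)] at h2δ
        have hstep : Λ⁻¹ * |u| * (y - x) ≤ 2 * δ :=
          le_trans (mul_le_mul_of_nonneg_right hlow (by linarith)) h2δ
        rw [le_div_iff₀ hu0]
        have hmul := mul_le_mul_of_nonneg_left hstep hΛ.le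
        have heq3 : Λ * (Λ⁻¹ * |u| * (y - x)) = |u| * (y - x) := by
          field_simp
        nlinarith [hmul, heq3]
      rcases Set.eq_empty_or_nonempty S with hSe | ⟨lam₀, hlam₀⟩
      · rw [hSe]; simp
      · set r : ℝ := 2 * Λ * δ / |u| with hr
        have hr0 : 0 ≤ r := by positivity
        have hSsub : S ⊆ Icc (lam₀ - r) (lam₀ + r) := by
          intro x hx
          rcases lt_trichotomy x lam₀ with hlt | heq | hgt
          · have := hdiam x hx lam₀ hlam₀ hlt
            constructor <;> linarith
          · subst heq; constructor <;> linarith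
          · have := hdiam lam₀ hlam₀ x hx hgt
            constructor <;> linarith
        calc volume S ≤ volume (Icc (lam₀ - r) (lam₀ + r)) := measure_mono hSsub
          _ = ENNReal.ofReal (2 * r) := by rw [Real.volume_Icc]; ring_nf
          _ ≤ ENNReal.ofReal ((3 * h + 12 * Λ) * δ / d) := by
              apply ENNReal.ofReal_le_ofReal
              have h4 : 2 * r = 4 * Λ * δ / |u| := by rw [hr]; ring
              rw [h4, div_le_div_iff₀ hu0 hd0]
              nlinarith [mul_le_mul_of_nonneg_left hu23 (by positivity : (0:ℝ) ≤ 12 * Λ * δ),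
                mul_pos (mul_pos hΛ hδ) hd0,
                mul_nonneg (mul_nonneg hh0.le hδ.le) (abs_nonneg u)]
end

section
/- Let x, y ∈ ℝⁿ be distinct and fix τ < m. Let ψ be a probability measure on A and suppose ψ{α : |π_α(x) - π_α(y)| ≤ δ|x-y|} ≤ c δ^m for all 0 < δ ≤ δ₀. Then ∫_A |x-y|^τ / |π_α(x) - π_α(y)|^τ dψ(α) ≤ C, where C depends only on c, δ₀, τ, m (and not on x, y). -/
open MeasureTheory Metric ENNReal

/-- for fixed distinct `x, y` and a transversal bound at scale
`δ ≤ δ₀`, the integral `∫ |x-y|^τ / |π_α x - π_α y|^τ dψ(α)` is bounded by a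
constant depending only on `c, δ₀, τ, m`. -/
theorem transversal_distance_ratio_integral_bound
    {ι X : Type*} [MeasurableSpace ι] [MetricSpace X]
    (c δ₀ τ m : ℝ) (hc : 0 < c) (hδ₀ : 0 < δ₀) (hτ : 0 < τ) (hτm : τ < m) :
    ∃ C : ℝ≥0∞, C ≠ ⊤ ∧
      ∀ (ψ : Measure ι), IsProbabilityMeasure ψ →
        ∀ (n : ℕ) (x y : EuclideanSpace ℝ (Fin n)) (π : ι → EuclideanSpace ℝ (Fin n) → X),
          x ≠ y →
          (∀ δ : ℝ, 0 < δ → δ ≤ δ₀ →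
            ψ {α | dist (π α x) (π α y) ≤ δ * dist x y} ≤ ENNReal.ofReal (c * δ ^ m)) →
          ∫⁻ α, (edist x y) ^ τ * (edist (π α x) (π α y)) ^ (-τ) ∂ψ ≤ C := by
  classical
  set K : ℝ≥0∞ := ENNReal.ofReal (δ₀⁻¹ ^ τ * 2 ^ τ) with hKdef
  set b : ℝ≥0∞ := ENNReal.ofReal ((2:ℝ) ^ τ) with hbdef
  set ρ : ℝ≥0∞ := ENNReal.ofReal ((2:ℝ) ^ τ * (2:ℝ)⁻¹ ^ m) with hρdef
  have h2τ : (1:ℝ) ≤ (2:ℝ) ^ τ := Real.one_le_rpow (by norm_num) hτ.le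
  have hKne : K ≠ 0 := by
    rw [hKdef, Ne, ENNReal.ofReal_eq_zero, not_le]
    positivity
  have hb1 : (1:ℝ≥0∞) ≤ b := by
    rw [hbdef, ← ENNReal.ofReal_one]
    exact ENNReal.ofReal_le_ofReal h2τ
  have hρ1 : ρ < 1 := by
    rw [hρdef, ← ENNReal.ofReal_one]
    apply (ENNReal.ofReal_lt_ofReal_iff one_pos).2
    have : (2:ℝ) ^ τ * (2:ℝ)⁻¹ ^ m = (2:ℝ) ^ (τ - m) := by
      rw [Real.inv_rpow (by norm_num), Real.rpow_sub (by norm_num), div_eq_mul_inv]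
    rw [this]
    exact Real.rpow_lt_one_of_one_lt_of_neg (by norm_num) (by linarith)
  refine ⟨K + K * ENNReal.ofReal (c * δ₀ ^ m) * (1 - ρ)⁻¹, ?_, ?_⟩
  · have h1 : (1 - ρ)⁻¹ ≠ ⊤ := by
      rw [Ne, ENNReal.inv_eq_top]
      exact (tsub_pos_of_lt hρ1).ne'
    exact ENNReal.add_ne_top.2 ⟨ENNReal.ofReal_ne_top,
      ENNReal.mul_ne_top (ENNReal.mul_ne_top ENNReal.ofReal_ne_top ENNReal.ofReal_ne_top) h1⟩
  intro ψ hψprob n x y π hxy hψ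
  have hd : 0 < dist x y := dist_pos.2 hxy
  set d := dist x y with hddef
  -- the sets
  set S : ℕ → Set ι := fun j => {α | dist (π α x) (π α y) ≤ δ₀ * (2:ℝ)⁻¹ ^ j * d} with hSdef
  set M : ℕ → Set ι := fun j => toMeasurable ψ (S j) with hMdef
  have hSM : ∀ j, S j ⊆ M j := fun j => subset_toMeasurable ψ (S j)
  have hMmeas : ∀ j, MeasurableSet (M j) := fun j => measurableSet_toMeasurable ψ (S j)
  have hψM : ∀ j, ψ (M j) ≤ ENNReal.ofReal (c * (δ₀ * (2:ℝ)⁻¹ ^ j) ^ m) := by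
    intro j
    rw [hMdef, measure_toMeasurable]
    exact hψ _ (by positivity) (by
      calc δ₀ * (2:ℝ)⁻¹ ^ j ≤ δ₀ * 1 := by
            apply mul_le_mul_of_nonneg_left _ hδ₀.le
            exact pow_le_one₀ (by norm_num) (by norm_num)
        _ = δ₀ := mul_one δ₀)
  -- majorant
  set g : ι → ℝ≥0∞ := fun α => K + ∑' j, (M j).indicator (fun _ => K * b ^ j) α with hgdef
  -- pointwise bound
  have hpoint : ∀ α, (edist x y) ^ τ * (edist (π α x) (π α y)) ^ (-τ) ≤ g α := by
    intro α
    set t := dist (π α x) (π α y) with htdef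
    have ht0 : 0 ≤ t := dist_nonneg
    have hgK : K ≤ g α := le_add_right le_rfl
    have hind : ∀ k, α ∈ M k → K * b ^ k ≤ g α := by
      intro k hk
      calc K * b ^ k = (M k).indicator (fun _ => K * b ^ k) α := by
            rw [Set.indicator_of_mem hk]
        _ ≤ ∑' j, (M j).indicator (fun _ => K * b ^ j) α := ENNReal.le_tsum k
        _ ≤ g α := le_add_self
    rcases eq_or_lt_of_le ht0 with ht | ht
    · -- t = 0 : g α = ⊤
      have hmem : ∀ j, α ∈ M j := fun j => hSM j (by
        simp only [hSdef, Set.mem_setOf_eq, ← htdef, ← ht]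
        positivity)
      have hgtop : g α = ⊤ := by
        have hle : (⊤ : ℝ≥0∞) ≤ ∑' j, (M j).indicator (fun _ => K * b ^ j) α := by
          rw [← (ENNReal.tsum_const_eq_top_of_ne_zero hKne : (∑' _ : ℕ, K) = ⊤)]
          refine ENNReal.tsum_le_tsum fun j => ?_
          rw [Set.indicator_of_mem (hmem j)]
          exact le_mul_of_one_le_right' (one_le_pow_of_one_le' hb1 j)
        rw [hgdef]
        simp only
        rw [ENNReal.add_eq_top]
        exact Or.inr (top_le_iff.1 hle)
      rw [hgtop]; exact le_top
    · -- t > 0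
      have hf : (edist x y) ^ τ * (edist (π α x) (π α y)) ^ (-τ)
          = ENNReal.ofReal ((d / t) ^ τ) := by
        rw [edist_dist, edist_dist, ← hddef, ← htdef,
          ENNReal.rpow_neg, ENNReal.ofReal_rpow_of_pos hd, ENNReal.ofReal_rpow_of_pos ht,
          ← ENNReal.ofReal_inv_of_pos (Real.rpow_pos_of_pos ht τ),
          ← ENNReal.ofReal_mul (Real.rpow_nonneg hd.le τ),
          Real.div_rpow hd.le ht0, div_eq_mul_inv]
      rw [hf]
      by_cases htδ : δ₀ * d < t
      · -- large distance: f ≤ K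
        refine le_trans ?_ hgK
        rw [hKdef]
        apply ENNReal.ofReal_le_ofReal
        have h1 : (d / t) ^ τ ≤ δ₀⁻¹ ^ τ := by
          apply Real.rpow_le_rpow (by positivity) _ hτ.le
          rw [div_le_iff₀ ht]
          rw [inv_mul_eq_div, le_div_iff₀ hδ₀]
          linarith
        calc (d / t) ^ τ ≤ δ₀⁻¹ ^ τ := h1
          _ = δ₀⁻¹ ^ τ * 1 := (mul_one _).symm
          _ ≤ δ₀⁻¹ ^ τ * 2 ^ τ := by
              apply mul_le_mul_of_nonneg_left h2τ (Real.rpow_nonneg (by positivity) τ)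
      · push_neg at htδ
        -- find the scale k
        have hex : ∃ N : ℕ, δ₀ * (2:ℝ)⁻¹ ^ N * d < t := by
          obtain ⟨N, hN⟩ := exists_pow_lt_of_lt_one (show (0:ℝ) < t / (δ₀ * d) by positivity)
            (show (2:ℝ)⁻¹ < 1 by norm_num)
          exact ⟨N, by rw [mul_comm δ₀ _, mul_assoc]; exact (lt_div_iff₀ (by positivity)).1 hN⟩
        set N := Nat.find hex with hNdef
        have hN : δ₀ * (2:ℝ)⁻¹ ^ N * d < t := Nat.find_spec hex
        have hN0 : N ≠ 0 := by
          intro h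
          rw [h] at hN
          simp only [pow_zero, mul_one] at hN
          linarith
        obtain ⟨k, hk⟩ : ∃ k, N = k + 1 := ⟨N - 1, (Nat.succ_pred_eq_of_pos (Nat.pos_of_ne_zero hN0)).symm⟩
        have hkmem : α ∈ S k := by
          have := Nat.find_min hex (by omega : k < N)
          push_neg at this
          simpa only [hSdef, Set.mem_setOf_eq, ← htdef] using this
        refine le_trans ?_ (hind k (hSM k hkmem))
        -- f ≤ K * b ^ k
        have hkub : (d / t) ^ τ ≤ (δ₀⁻¹ ^ τ * 2 ^ τ) * ((2:ℝ) ^ τ) ^ k := by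
          have h1 : d / t ≤ δ₀⁻¹ * 2 ^ (k + 1) := by
            rw [div_le_iff₀ ht]
            have h2 : δ₀ * (2:ℝ)⁻¹ ^ (k+1) * d < t := by rw [← hk]; exact hN
            have h3 : (0:ℝ) < (2:ℝ) ^ (k+1) := by positivity
            rw [inv_pow] at h2
            calc d = (δ₀⁻¹ * 2 ^ (k+1)) * (δ₀ * ((2:ℝ) ^ (k+1))⁻¹ * d) := by
                  field_simp
              _ ≤ (δ₀⁻¹ * 2 ^ (k+1)) * t := by
                  apply mul_le_mul_of_nonneg_left h2.le (by positivity)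
          calc (d / t) ^ τ ≤ (δ₀⁻¹ * 2 ^ (k + 1)) ^ τ :=
                Real.rpow_le_rpow (by positivity) h1 hτ.le
            _ = δ₀⁻¹ ^ τ * ((2:ℝ) ^ (k+1)) ^ τ :=
                Real.mul_rpow (by positivity) (by positivity)
            _ = (δ₀⁻¹ ^ τ * 2 ^ τ) * ((2:ℝ) ^ τ) ^ k := by
                have hpw : (((2:ℝ) ^ (k+1) : ℝ)) ^ τ = 2 ^ τ * ((2:ℝ) ^ τ) ^ k := by
                  have h1 : ((2:ℝ) ^ τ) ^ k = (2:ℝ) ^ (τ * k) := by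
                    rw [← Real.rpow_natCast ((2:ℝ) ^ τ) k, ← Real.rpow_mul (by norm_num)]
                  have h2 : (((2:ℝ) ^ (k+1) : ℝ)) ^ τ = (2:ℝ) ^ ((((k:ℝ))+1) * τ) := by
                    rw [← Real.rpow_natCast (2:ℝ) (k+1), ← Real.rpow_mul (by norm_num)]
                    push_cast
                    ring_nf
                  rw [h1, h2, ← Real.rpow_add (by norm_num)]
                  congr 1
                  ring
                rw [hpw]
                ring
        calc ENNReal.ofReal ((d / t) ^ τ)
            ≤ ENNReal.ofReal ((δ₀⁻¹ ^ τ * 2 ^ τ) * ((2:ℝ) ^ τ) ^ k) :=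
              ENNReal.ofReal_le_ofReal hkub
          _ = K * b ^ k := by
              rw [ENNReal.ofReal_mul (by positivity), hKdef, hbdef, ENNReal.ofReal_pow (by positivity)]
  -- integrate
  calc ∫⁻ α, (edist x y) ^ τ * (edist (π α x) (π α y)) ^ (-τ) ∂ψ
      ≤ ∫⁻ α, g α ∂ψ := lintegral_mono hpoint
    _ = K + ∑' j, (K * b ^ j) * ψ (M j) := by
        rw [hgdef]
        simp only
        rw [lintegral_add_left measurable_const, lintegral_const, measure_univ, mul_one]
        congr 1
        rw [lintegral_tsum (fun j => (measurable_const.indicator (hMmeas j)).aemeasurable)]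
        congr 1
        ext j
        rw [lintegral_indicator_const (hMmeas j)]
    _ ≤ K + K * ENNReal.ofReal (c * δ₀ ^ m) * (1 - ρ)⁻¹ := by
        refine add_le_add le_rfl ?_
        have hterm : ∀ j : ℕ, (K * b ^ j) * ψ (M j) ≤ K * ENNReal.ofReal (c * δ₀ ^ m) * ρ ^ j := by
          intro j
          calc (K * b ^ j) * ψ (M j)
              ≤ (K * b ^ j) * ENNReal.ofReal (c * (δ₀ * (2:ℝ)⁻¹ ^ j) ^ m) :=
                mul_le_mul_right (hψM j) _
            _ = K * ENNReal.ofReal (c * δ₀ ^ m) * ρ ^ j := by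
                have hreal : c * (δ₀ * (2:ℝ)⁻¹ ^ j) ^ m
                    = (c * δ₀ ^ m) * ((2:ℝ)⁻¹ ^ m) ^ j := by
                  rw [Real.mul_rpow hδ₀.le (by positivity)]
                  have h1 : ((2:ℝ)⁻¹ ^ j : ℝ) ^ m = ((2:ℝ)⁻¹ ^ m) ^ j := by
                    rw [← Real.rpow_natCast ((2:ℝ)⁻¹) j, ← Real.rpow_natCast ((2:ℝ)⁻¹ ^ m) j,
                      ← Real.rpow_mul (by norm_num), ← Real.rpow_mul (by norm_num), mul_comm (j:ℝ) m]
                  rw [h1]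
                  ring
                rw [hreal, hρdef, hbdef,
                  ENNReal.ofReal_mul (show (0:ℝ) ≤ c * δ₀ ^ m by positivity),
                  ENNReal.ofReal_pow (show (0:ℝ) ≤ (2:ℝ)⁻¹ ^ m by positivity),
                  ENNReal.ofReal_mul (show (0:ℝ) ≤ (2:ℝ) ^ τ by positivity), mul_pow]
                ring
        calc ∑' j, (K * b ^ j) * ψ (M j)
            ≤ ∑' j, K * ENNReal.ofReal (c * δ₀ ^ m) * ρ ^ j := ENNReal.tsum_le_tsum hterm
          _ = K * ENNReal.ofReal (c * δ₀ ^ m) * (1 - ρ)⁻¹ := by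
              rw [ENNReal.tsum_mul_left, ENNReal.tsum_geometric]
end
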